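/- arXiv:1812.01150 — 3 statements merged into one kernel-verified Lean document; each statement's English description precedes it below -/
import Mathlib

section
/- Let k be a totally real number field with real embeddings σ₁,…,σ_ℓ, and for each i let U_i be a nonempty open subset of ℝ. Then there exists c ∈ k such that √c ∉ k and σ_i(c) ∈ U_i for all 1 ≤ i ≤ ℓ. -/
open Polynomial IntermediateField

private lemma rat_sq_ne_nat {n : ℕ} (hn : ¬ IsSquare n) (r : ℚ) : r ^ 2 ≠ (n : ℚ) := by
  intro h
  exact hn (Rat.isSquare_natCast_iff.mp ⟨r, by rw [← h]; ring⟩)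

private lemma eq_add_rat_mul {K : Type*} [Field K] [CharZero K] {x y : K} {c : ℚ}
    (hx : x ^ 2 = (c : K)) (hy : y ∈ IntermediateField.adjoin ℚ {x}) :
    ∃ a b : ℚ, y = (a : K) + (b : K) * x := by
  have hint : IsIntegral ℚ x := by
    refine ⟨X ^ 2 - C c, monic_X_pow_sub_C c (by norm_num), ?_⟩
    simp [hx, eq_ratCast]
  have hmem : y ∈ Algebra.adjoin ℚ {x} := by
    have := IntermediateField.adjoin_simple_toSubalgebra_of_isAlgebraic hint.isAlgebraic
    rw [← this]
    exact hy
  rw [Algebra.adjoin_singleton_eq_range_aeval] at hmem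
  obtain ⟨f, hf⟩ := hmem
  have hm : (X ^ 2 - C c).Monic := monic_X_pow_sub_C c (by norm_num)
  set R := f %ₘ (X ^ 2 - C c) with hR
  have hdeg : R.degree < 2 := by
    have h2 : (X ^ 2 - C c).degree = 2 := by
      simpa using degree_X_pow_sub_C (by norm_num : 0 < 2) c
    simpa [h2] using degree_modByMonic_lt f hm
  have hdeg1 : R.degree ≤ 1 := by
    have h := Nat.WithBot.add_one_le_of_lt hdeg
    rwa [show (2 : WithBot ℕ) = 1 + 1 by norm_num,
      WithBot.add_le_add_iff_right (by simp : (1 : WithBot ℕ) ≠ ⊥)] at h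
  have hy2 : y = aeval x R := by
    conv_lhs => rw [← hf, ← modByMonic_add_div f (X ^ 2 - C c)]
    simp [hx, eq_ratCast]
    rfl
  refine ⟨R.coeff 0, R.coeff 1, ?_⟩
  rw [hy2]
  conv_lhs => rw [eq_X_add_C_of_degree_le_one hdeg1]
  rw [map_add, map_mul, aeval_C, aeval_C, aeval_X, eq_ratCast, eq_ratCast]
  ring

private lemma key_alg {K : Type*} [Field K] [CharZero K] {x y : K} {P Q : ℚ}
    (hx : x ^ 2 = (P : K)) (hy : y ^ 2 = (Q : K))
    (hmem : y ∈ IntermediateField.adjoin ℚ {x})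
    (hP : ∀ r : ℚ, r ^ 2 ≠ P) (hQ : ∀ r : ℚ, r ^ 2 ≠ Q)
    (hPQ : ∀ r : ℚ, r ^ 2 ≠ P * Q) : False := by
  obtain ⟨a, b, hab⟩ := eq_add_rat_mul hx hmem
  have hy' : ((a : K) + (b : K) * x) ^ 2 = (Q : K) := by rw [← hab]; exact hy
  by_cases hb : b = 0
  · refine hQ a ?_
    have : ((a ^ 2 : ℚ) : K) = (Q : K) := by
      rw [Rat.cast_pow, ← hy', hb]
      push_cast
      ring
    exact_mod_cast this
  · by_cases ha : a = 0
    · -- y = b x, Q = b^2 P, so (b*P)^2 = P*Q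
      have hbP : ((b ^ 2 * P : ℚ) : K) = (Q : K) := by
        rw [Rat.cast_mul, Rat.cast_pow, ← hy', ha]
        push_cast
        linear_combination (-(b : K) ^ 2) * hx
      have hbPQ : b ^ 2 * P = Q := by exact_mod_cast hbP
      refine hPQ (b * P) ?_
      linear_combination P * hbPQ
    · -- x is rational
      have h2ab : (2 * a * b : ℚ) ≠ 0 := by
        simp [ha, hb]
      have h1 : ((2 * a * b : ℚ) : K) * x = ((Q - a ^ 2 - b ^ 2 * P : ℚ) : K) := by
        push_cast
        linear_combination hy' - (b : K) ^ 2 * hx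
      have h2K : ((2 * a * b : ℚ) : K) ≠ 0 := by exact_mod_cast h2ab
      have hxr : x = (((Q - a ^ 2 - b ^ 2 * P) / (2 * a * b) : ℚ) : K) := by
        rw [Rat.cast_div, eq_div_iff h2K]
        linear_combination h1
      refine hP ((Q - a ^ 2 - b ^ 2 * P) / (2 * a * b)) ?_
      have : (((((Q - a ^ 2 - b ^ 2 * P) / (2 * a * b)) ^ 2 : ℚ)) : K) = (P : K) := by
        rw [Rat.cast_pow, ← hxr]
        exact hx
      exact_mod_cast this

private lemma exists_prime_nonsquare (K : Type*) [Field K] [NumberField K] :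
    ∃ p : ℕ, p.Prime ∧ ¬ ∃ x : K, x ^ 2 = (p : K) := by
  by_contra hcon
  push_neg at hcon
  have hfin : Finite (IntermediateField ℚ K) :=
    Field.finite_intermediateField_of_exists_primitive_element ℚ K
      (Field.exists_primitive_element ℚ K)
  haveI : Infinite {p : ℕ // p.Prime} :=
    Set.infinite_coe_iff.mpr Nat.infinite_setOf_prime
  obtain ⟨⟨p, hp⟩, ⟨q, hq⟩, hne, heq⟩ :=
    Finite.exists_ne_map_eq_of_infinite
      (fun p : {p : ℕ // p.Prime} =>
        IntermediateField.adjoin ℚ {(hcon p.1 p.2).choose})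
  have hpq : p ≠ q := by simpa using hne
  set x := (hcon p hp).choose with hxdef
  set y := (hcon q hq).choose with hydef
  have hx : x ^ 2 = (((p : ℚ)) : K) := by
    rw [Rat.cast_natCast]; exact (hcon p hp).choose_spec
  have hy : y ^ 2 = (((q : ℚ)) : K) := by
    rw [Rat.cast_natCast]; exact (hcon q hq).choose_spec
  have hymem : y ∈ IntermediateField.adjoin ℚ {x} := by
    rw [heq]
    exact IntermediateField.mem_adjoin_simple_self ℚ y
  have hsqf : ¬ IsSquare (p * q) := by
    intro hsq
    obtain ⟨k, hk⟩ := hsq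
    have hsqf : Squarefree (p * q) :=
      (Nat.squarefree_mul ((Nat.coprime_primes hp hq).mpr hpq)).mpr
        ⟨hp.squarefree, hq.squarefree⟩
    have hk1 : k = 1 := Nat.isUnit_iff.mp (hsqf k (by rw [hk]))
    rw [hk1] at hk
    simp only [mul_one] at hk
    exact hp.one_lt.ne' (Nat.dvd_one.mp ⟨q, hk.symm⟩)
  refine key_alg hx hy hymem
    (fun r => rat_sq_ne_nat hp.prime.not_isSquare r)
    (fun r => rat_sq_ne_nat hq.prime.not_isSquare r)
    (fun r hr => rat_sq_ne_nat hsqf r (by push_cast; exact hr))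

private lemma dense_embeddings (K : Type*) [Field K] [NumberField K]
    (ℓ : ℕ) (hℓ : ℓ = Module.finrank ℚ K)
    (σ : Fin ℓ → (K →+* ℝ)) (hσ : Function.Injective σ) :
    DenseRange (fun x : K => (fun i => σ i x : Fin ℓ → ℝ)) := by
  classical
  let b : Module.Basis (Fin ℓ) ℚ K := (Module.finBasis ℚ K).reindex (finCongr hℓ.symm)
  let M : Matrix (Fin ℓ) (Fin ℓ) ℝ := Matrix.of fun i j => σ i (b j)
  -- Dedekind independence of characters
  have hded : LinearIndependent ℝ (fun i : Fin ℓ => (⇑(σ i) : K → ℝ)) := by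
    have hinj : Function.Injective (fun i : Fin ℓ => ((σ i).toMonoidHom : K →* ℝ)) := by
      intro i j h
      apply hσ
      ext z
      exact DFunLike.congr_fun h z
    exact (linearIndependent_monoidHom K ℝ).comp _ hinj
  have hrows : LinearIndependent ℝ (fun i => M i) := by
    rw [Fintype.linearIndependent_iff]
    intro g hg
    refine Fintype.linearIndependent_iff.mp hded g ?_
    funext z
    have hz : z = ∑ j, b.repr z j • b j := (b.sum_repr z).symm
    have hσz : ∀ i : Fin ℓ, σ i z = ∑ j, (b.repr z j : ℝ) * σ i (b j) := by
      intro i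
      conv_lhs => rw [hz]
      rw [map_sum]
      refine Finset.sum_congr rfl fun j _ => ?_
      rw [Rat.smul_def, map_mul, map_ratCast]
    have hcol : ∀ j, ∑ i, g i * M i j = 0 := by
      intro j
      have := congrFun hg j
      simpa [Finset.sum_apply] using this
    calc (∑ i, g i • ⇑(σ i)) z = ∑ i, g i * σ i z := by simp [Finset.sum_apply]
      _ = ∑ i, ∑ j, (b.repr z j : ℝ) * (g i * M i j) := by
          refine Finset.sum_congr rfl fun i _ => ?_
          rw [hσz i, Finset.mul_sum]
          refine Finset.sum_congr rfl fun j _ => ?_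
          simp only [M, Matrix.of_apply]
          ring
      _ = ∑ j, (b.repr z j : ℝ) * (∑ i, g i * M i j) := by
          rw [Finset.sum_comm]
          simp [Finset.mul_sum]
      _ = 0 := by simp [hcol]
  have hunit : IsUnit M := Matrix.linearIndependent_rows_iff_isUnit.mp hrows
  have hInv : Invertible M :=
    Matrix.invertibleOfIsUnitDet M ((Matrix.isUnit_iff_isUnit_det M).mp hunit)
  let e : (Fin ℓ → ℝ) ≃L[ℝ] (Fin ℓ → ℝ) := (M.toLinearEquiv' hInv).toContinuousLinearEquiv
  have hcast : DenseRange (fun q : Fin ℓ → ℚ => (fun i => (q i : ℝ) : Fin ℓ → ℝ)) := by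
    have heq : Set.range (fun q : Fin ℓ → ℚ => (fun i => (q i : ℝ) : Fin ℓ → ℝ))
        = Set.univ.pi (fun _ => Set.range ((↑) : ℚ → ℝ)) := by
      ext v
      constructor
      · rintro ⟨q, rfl⟩ i _
        exact ⟨q i, rfl⟩
      · intro hv
        choose q hq using fun i => hv i (Set.mem_univ i)
        exact ⟨q, funext hq⟩
    show Dense (Set.range fun q : Fin ℓ → ℚ => (fun i => (q i : ℝ) : Fin ℓ → ℝ))
    rw [heq]
    exact dense_pi Set.univ (fun i _ => Rat.denseRange_cast)
  have hcomp : DenseRange (⇑e ∘ fun q : Fin ℓ → ℚ => (fun i => (q i : ℝ))) :=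
    (e.surjective.denseRange).comp hcast e.continuous
  refine Dense.mono ?_ hcomp
  rintro _ ⟨q, rfl⟩
  refine ⟨∑ j, q j • b j, ?_⟩
  funext i
  show σ i (∑ j, q j • b j) = e (fun i => (q i : ℝ)) i
  have he : e (fun i => (q i : ℝ)) = M.mulVec (fun i => (q i : ℝ)) := rfl
  rw [he]
  rw [map_sum]
  simp only [Matrix.mulVec, dotProduct]
  refine Finset.sum_congr rfl fun j _ => ?_
  rw [Rat.smul_def, map_mul, map_ratCast]
  simp only [M, Matrix.of_apply]
  ring

/-- **Weak approximation with a non-square** (Lemma `choiceofc`).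
Let `K` be a totally real number field of degree `ℓ` over `ℚ`, presented by an injective
family `σ : Fin ℓ → (K →+* ℝ)` of `ℓ` distinct real embeddings (`ℓ = [K : ℚ]`, so these are
all the embeddings).  For every family of nonempty open sets `U i ⊆ ℝ` there exists `c ∈ K`
which is not a square in `K` (i.e. `√c ∉ K`) and with `σ i c ∈ U i` for all `i`. -/
theorem choice_of_c
    (K : Type*) [Field K] [NumberField K]
    (ℓ : ℕ) (hℓ : ℓ = Module.finrank ℚ K)
    (σ : Fin ℓ → (K →+* ℝ)) (hσ : Function.Injective σ)
    (U : Fin ℓ → Set ℝ) (hUopen : ∀ i, IsOpen (U i)) (hUne : ∀ i, (U i).Nonempty) :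
    ∃ c : K, (¬ ∃ x : K, x ^ 2 = c) ∧ ∀ i, σ i c ∈ U i := by
  classical
  have hdense := dense_embeddings K ℓ hℓ σ hσ
  have hpos : 0 < ℓ := hℓ ▸ Module.finrank_pos
  have i₀ : Fin ℓ := ⟨0, hpos⟩
  by_cases hneg : ∃ i, ∃ u ∈ U i, u < 0
  · obtain ⟨i, u, hu, hult⟩ := hneg
    set V : Fin ℓ → Set ℝ := fun j => if j = i then U j ∩ Set.Iio 0 else U j with hV
    have hVopen : ∀ j, IsOpen (V j) := by
      intro j
      by_cases h : j = i <;> simp only [hV, h, if_true, if_false]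
      · exact (hUopen _).inter isOpen_Iio
      · exact hUopen j
    have hVne : ∀ j, (V j).Nonempty := by
      intro j
      by_cases h : j = i
      · subst h; simp only [hV, if_pos rfl]; exact ⟨u, hu, hult⟩
      · simpa [hV, h] using hUne j
    have hsopen : IsOpen (Set.univ.pi V) := isOpen_set_pi Set.finite_univ fun j _ => hVopen j
    have hsne : (Set.univ.pi V).Nonempty :=
      ⟨fun j => (hVne j).choose, fun j _ => (hVne j).choose_spec⟩
    obtain ⟨c, hc⟩ := hdense.exists_mem_open hsopen hsne
    have hc' : ∀ j, σ j c ∈ V j := fun j => hc j (Set.mem_univ j)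
    refine ⟨c, ?_, fun j => ?_⟩
    · rintro ⟨x, rfl⟩
      have h1 : σ i (x ^ 2) < 0 := by
        have := hc' i
        simp only [hV, if_pos rfl] at this
        exact this.2
      rw [map_pow] at h1
      exact absurd h1 (not_lt.mpr (sq_nonneg _))
    · have := hc' j
      by_cases h : j = i
      · subst h; simp only [hV, if_pos rfl] at this; exact this.1
      · simpa [hV, h] using this
  · push_neg at hneg
    choose u hu using hUne
    have hupos : ∀ i, 0 < u i := by
      intro i
      rcases lt_or_eq_of_le (hneg i (u i) (hu i)) with h | h
      · exact h
      · exfalso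
        obtain ⟨ε, hε, hball⟩ := Metric.isOpen_iff.mp (hUopen i) (u i) (hu i)
        have hmem : u i - ε / 2 ∈ U i := by
          apply hball
          rw [Metric.mem_ball, Real.dist_eq]
          rw [show u i - ε / 2 - u i = -(ε / 2) by ring, abs_neg, abs_of_pos (by linarith)]
          linarith
        have := hneg i _ hmem
        linarith
    obtain ⟨p, hp, hpns⟩ := exists_prime_nonsquare K
    have hppos : (0 : ℝ) < p := by exact_mod_cast hp.pos
    set V : Fin ℓ → Set ℝ := fun i => Set.Ioi 0 ∩ (fun s => (p : ℝ) * s ^ 2) ⁻¹' U i with hV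
    have hVopen : ∀ i, IsOpen (V i) :=
      fun i => isOpen_Ioi.inter ((hUopen i).preimage (by continuity))
    have hVne : ∀ i, (V i).Nonempty := by
      intro i
      refine ⟨Real.sqrt (u i / p), ?_, ?_⟩
      · exact Real.sqrt_pos.mpr (div_pos (hupos i) hppos)
      · show (p : ℝ) * Real.sqrt (u i / p) ^ 2 ∈ U i
        rw [Real.sq_sqrt (le_of_lt (div_pos (hupos i) hppos)),
          mul_div_cancel₀ _ (ne_of_gt hppos)]
        exact hu i
    have hsopen : IsOpen (Set.univ.pi V) := isOpen_set_pi Set.finite_univ fun j _ => hVopen j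
    have hsne : (Set.univ.pi V).Nonempty :=
      ⟨fun j => (hVne j).choose, fun j _ => (hVne j).choose_spec⟩
    obtain ⟨x, hx⟩ := hdense.exists_mem_open hsopen hsne
    have hx' : ∀ j, σ j x ∈ V j := fun j => hx j (Set.mem_univ j)
    have hxne : x ≠ 0 := by
      intro h0
      have := (hx' i₀).1
      rw [h0, map_zero] at this
      exact lt_irrefl _ (Set.mem_Ioi.mp this)
    refine ⟨(p : K) * x ^ 2, ?_, fun j => ?_⟩
    · rintro ⟨y, hy⟩
      refine hpns ⟨y / x, ?_⟩
      rw [div_pow, hy, mul_div_assoc,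
        div_self (pow_ne_zero 2 hxne), mul_one]
    · have := (hx' j).2
      simpa [map_mul, map_pow, map_natCast] using this
end

section
/- Let A be an n×n complex Hermitian matrix and ε > 0. Then there exists δ > 0 (depending on ε and A) such that for every Hermitian matrix B with ‖A − B‖ < δ there exist unitary matrices R, S ∈ U(n) with R A R⁻¹ and S B S⁻¹ diagonal, ‖R A R⁻¹ − S B S⁻¹‖ < ε, and ‖R − S‖ < ε. -/
open Matrix

/-- Frobenius norm of a complex matrix: `‖M‖² = tr (M Mᴴ)`. -/
noncomputable def frobNorm {n : ℕ} (M : Matrix (Fin n) (Fin n) ℂ) : ℝ :=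
  Real.sqrt ((M * Mᴴ).trace.re)

attribute [local instance] Matrix.frobeniusSeminormedAddCommGroup
  Matrix.frobeniusNormedAddCommGroup Matrix.frobeniusNormedRing
  Matrix.frobeniusNormedSpace

lemma trace_mul_conjTranspose_re {n : ℕ} (M : Matrix (Fin n) (Fin n) ℂ) :
    ((M * Mᴴ).trace).re = ∑ i, ∑ j, ‖M i j‖ ^ 2 := by
  simp only [Matrix.trace, Matrix.diag, Matrix.mul_apply, Matrix.conjTranspose_apply,
    Complex.re_sum]
  congr 1; ext i; congr 1; ext j
  rw [Complex.star_def, Complex.mul_conj]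
  simp [Complex.normSq_eq_norm_sq, ← Complex.ofReal_pow]

lemma frobNorm_eq {n : ℕ} (M : Matrix (Fin n) (Fin n) ℂ) : frobNorm M = ‖M‖ := by
  rw [frobNorm, Matrix.frobenius_norm_def, trace_mul_conjTranspose_re,
    Real.sqrt_eq_rpow]
  norm_num [Real.rpow_two]

lemma unitary_coe_inv_eq_star {n : ℕ} (R : Matrix.unitaryGroup (Fin n) ℂ) :
    (R : Matrix (Fin n) (Fin n) ℂ)⁻¹ = star (R : Matrix (Fin n) (Fin n) ℂ) :=
  Matrix.inv_eq_left_inv (Unitary.mem_iff.mp R.2).1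

lemma norm_of_unitary {n : ℕ} {U : Matrix (Fin n) (Fin n) ℂ}
    (hU : U ∈ Matrix.unitaryGroup (Fin n) ℂ) : ‖U‖ = Real.sqrt n := by
  rw [← frobNorm_eq, frobNorm]
  have h : U * Uᴴ = 1 := by
    rw [← Matrix.star_eq_conjTranspose]
    exact (Matrix.mem_unitaryGroup_iff.mp hU)
  rw [h, Matrix.trace_one]
  norm_num

/-- **Simultaneous approximate diagonalization of nearby Hermitian matrices**
(Lemma `closediag`).  Given a Hermitian `A` and `ε > 0`, there is `δ > 0` such that for any
Hermitian `B` with `‖A − B‖ < δ` there are unitaries `R, S ∈ U(n)` with `R A R⁻¹` and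
`S B S⁻¹` diagonal, `‖R A R⁻¹ − S B S⁻¹‖ < ε` and `‖R − S‖ < ε`. -/
theorem close_hermitian_simultaneous_diag
    {n : ℕ} (A : Matrix (Fin n) (Fin n) ℂ) (hA : A.IsHermitian)
    (ε : ℝ) (hε : 0 < ε) :
    ∃ δ : ℝ, 0 < δ ∧ ∀ B : Matrix (Fin n) (Fin n) ℂ, B.IsHermitian →
      frobNorm (A - B) < δ →
      ∃ R S : Matrix.unitaryGroup (Fin n) ℂ,
        ((R : Matrix (Fin n) (Fin n) ℂ) * A * (R : Matrix (Fin n) (Fin n) ℂ)⁻¹).IsDiag ∧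
        ((S : Matrix (Fin n) (Fin n) ℂ) * B * (S : Matrix (Fin n) (Fin n) ℂ)⁻¹).IsDiag ∧
        frobNorm ((R : Matrix (Fin n) (Fin n) ℂ) * A * (R : Matrix (Fin n) (Fin n) ℂ)⁻¹
          - (S : Matrix (Fin n) (Fin n) ℂ) * B * (S : Matrix (Fin n) (Fin n) ℂ)⁻¹) < ε ∧
        frobNorm ((R : Matrix (Fin n) (Fin n) ℂ) - (S : Matrix (Fin n) (Fin n) ℂ)) < ε := by
  by_contra hcon
  push_neg at hcon
  -- extract a sequence of bad Hermitian matrices converging to A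
  have hc : ∀ k : ℕ, ∃ B : Matrix (Fin n) (Fin n) ℂ, B.IsHermitian ∧
      frobNorm (A - B) < 1 / (k + 1) ∧ ∀ R S : Matrix.unitaryGroup (Fin n) ℂ,
        ((R : Matrix (Fin n) (Fin n) ℂ) * A * (R : Matrix (Fin n) (Fin n) ℂ)⁻¹).IsDiag →
        ((S : Matrix (Fin n) (Fin n) ℂ) * B * (S : Matrix (Fin n) (Fin n) ℂ)⁻¹).IsDiag →
        frobNorm ((R : Matrix (Fin n) (Fin n) ℂ) * A * (R : Matrix (Fin n) (Fin n) ℂ)⁻¹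
          - (S : Matrix (Fin n) (Fin n) ℂ) * B * (S : Matrix (Fin n) (Fin n) ℂ)⁻¹) < ε →
        ε ≤ frobNorm ((R : Matrix (Fin n) (Fin n) ℂ) - (S : Matrix (Fin n) (Fin n) ℂ)) := by
    intro k
    obtain ⟨B, hB1, hB2, hB3⟩ := hcon (1 / (k + 1)) (by positivity)
    exact ⟨B, hB1, hB2, hB3⟩
  choose B hBherm hBclose hBbad using hc
  -- the diagonalizing unitaries of the B k
  set S : ℕ → Matrix.unitaryGroup (Fin n) ℂ :=
    fun k => star ((hBherm k).eigenvectorUnitary) with hS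
  have hSdiag : ∀ k, (S k : Matrix (Fin n) (Fin n) ℂ) * B k *
      star (S k : Matrix (Fin n) (Fin n) ℂ)
      = diagonal (RCLike.ofReal ∘ (hBherm k).eigenvalues) := by
    intro k
    have := (hBherm k).conjStarAlgAut_star_eigenvectorUnitary
    simpa [hS, Unitary.coe_star] using this
  -- the unitary group is compact
  have hclosed : IsClosed ((Matrix.unitaryGroup (Fin n) ℂ : Set (Matrix (Fin n) (Fin n) ℂ))) := by
    have heq : (Matrix.unitaryGroup (Fin n) ℂ : Set (Matrix (Fin n) (Fin n) ℂ)) =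
        (fun U : Matrix (Fin n) (Fin n) ℂ => U * star U) ⁻¹' {1} := by
      ext U
      simp [Matrix.mem_unitaryGroup_iff]
    rw [heq]
    exact isClosed_singleton.preimage (continuous_id.mul continuous_star)
  have hbdd : Bornology.IsBounded
      ((Matrix.unitaryGroup (Fin n) ℂ : Set (Matrix (Fin n) (Fin n) ℂ))) := by
    rw [Metric.isBounded_iff_subset_closedBall 0]
    refine ⟨Real.sqrt n, fun U hU => ?_⟩
    rw [Metric.mem_closedBall, dist_zero_right, norm_of_unitary hU]
  have hcompact := Metric.isCompact_of_isClosed_isBounded hclosed hbdd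
  -- extract a convergent subsequence of the S k
  obtain ⟨L, hLmem, φ, hφ, hconv⟩ := hcompact.tendsto_subseq
    (x := fun k => (S k : Matrix (Fin n) (Fin n) ℂ)) (fun k => (S k).2)
  -- B k converges to A
  have hBconv : Filter.Tendsto B Filter.atTop (nhds A) := by
    refine tendsto_iff_norm_sub_tendsto_zero.mpr ?_
    refine squeeze_zero (fun k => norm_nonneg _) (fun k => ?_)
      tendsto_one_div_add_atTop_nhds_zero_nat
    rw [norm_sub_rev, ← frobNorm_eq]
    exact (hBclose k).le
  -- the conjugated matrices converge
  set Dlim : Matrix (Fin n) (Fin n) ℂ := L * A * star L with hDlim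
  have hDconv : Filter.Tendsto
      (fun k => (S (φ k) : Matrix (Fin n) (Fin n) ℂ) * B (φ k) *
        star (S (φ k) : Matrix (Fin n) (Fin n) ℂ)) Filter.atTop (nhds Dlim) :=
    (hconv.mul (hBconv.comp hφ.tendsto_atTop)).mul hconv.star
  -- Dlim is diagonal
  have hDlimDiag : Dlim.IsDiag := by
    intro i j hij
    have hent : Filter.Tendsto
        (fun k => ((S (φ k) : Matrix (Fin n) (Fin n) ℂ) * B (φ k) *
          star (S (φ k) : Matrix (Fin n) (Fin n) ℂ)) i j) Filter.atTop (nhds (Dlim i j)) :=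
      ((Matrix.entryLinearMap ℂ ℂ i j).continuous_of_finiteDimensional.tendsto Dlim).comp hDconv
    have hzero : ∀ k, ((S (φ k) : Matrix (Fin n) (Fin n) ℂ) * B (φ k) *
        star (S (φ k) : Matrix (Fin n) (Fin n) ℂ)) i j = 0 := by
      intro k
      rw [hSdiag (φ k)]
      exact Matrix.diagonal_apply_ne _ hij
    simp only [hzero] at hent
    exact tendsto_nhds_unique hent tendsto_const_nhds
  -- pick k large enough
  have h1 := (Metric.tendsto_atTop.mp hDconv) ε hε
  have h2 := (Metric.tendsto_atTop.mp hconv) ε hε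
  obtain ⟨N1, hN1⟩ := h1
  obtain ⟨N2, hN2⟩ := h2
  set k := max N1 N2
  have hk1 := hN1 k (le_max_left _ _)
  have hk2 := hN2 k (le_max_right _ _)
  -- produce the contradiction
  have hLinv : (L : Matrix (Fin n) (Fin n) ℂ)⁻¹ = star L :=
    unitary_coe_inv_eq_star ⟨L, hLmem⟩
  have hSinv : ((S (φ k) : Matrix (Fin n) (Fin n) ℂ))⁻¹
      = star (S (φ k) : Matrix (Fin n) (Fin n) ℂ) := unitary_coe_inv_eq_star _
  have hbad := hBbad (φ k) ⟨L, hLmem⟩ (S (φ k))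
  rw [hLinv, hSinv] at hbad
  have hdiag2 : ((S (φ k) : Matrix (Fin n) (Fin n) ℂ) * B (φ k) *
      star (S (φ k) : Matrix (Fin n) (Fin n) ℂ)).IsDiag := by
    rw [hSdiag (φ k)]
    exact Matrix.isDiag_diagonal _
  have hlt1 : frobNorm (L * A * star L - (S (φ k) : Matrix (Fin n) (Fin n) ℂ) * B (φ k) *
      star (S (φ k) : Matrix (Fin n) (Fin n) ℂ)) < ε := by
    rw [frobNorm_eq, ← dist_eq_norm, dist_comm]
    exact hk1
  have hlt2 : frobNorm (L - (S (φ k) : Matrix (Fin n) (Fin n) ℂ)) < ε := by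
    rw [frobNorm_eq, ← dist_eq_norm, dist_comm]
    exact hk2
  have := hbad hDlimDiag hdiag2 hlt1
  exact absurd hlt2 (not_lt.mpr this)
end

section
/- With notation as in the fibration setup for U(p,q): for the base point z₀ = span{v_{p+1},…,v_{p+q}} with majorant norm ‖·‖_{z₀} making v₁,…,v_{p+q} orthonormal, and for X = Σ_μ x_{1μ} E_{1μ} − Σ_μ y_{1μ} F_{1μ} a real combination of the normal vectors at z₀ to the subsymmetric space D₁ fixing v₁, setting t = (Σ_μ (x_{1μ}² + y_{1μ}²))^{1/2}, one has ‖exp(−X)(v₁)‖_{z₀}² = cosh²(t) + sinh²(t). In particular ‖exp(−X)(v₁)‖_{z₀}² ≥ 1 with equality iff X = 0. -/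
open Matrix
open scoped Nat


theorem mySum_mulVec {ι m n R : Type*} [Fintype n] [NonUnitalNonAssocSemiring R]
    (s : Finset ι) (A : ι → Matrix m n R) (v : n → R) :
    (∑ i ∈ s, A i) *ᵥ v = ∑ i ∈ s, (A i *ᵥ v) := by
  ext j
  simp only [Matrix.mulVec, dotProduct, Finset.sum_apply, Matrix.sum_apply,
    Finset.sum_mul]
  rw [Finset.sum_comm]

theorem myCol_ext {n : ℕ} (M N : Matrix (Fin n) (Fin n) ℂ)
    (h : ∀ j, M *ᵥ Pi.single j 1 = N *ᵥ Pi.single j 1) : M = N := by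
  ext i j
  have := congrFun (h j) i
  simpa using this

theorem myRealSmul {n : ℕ} (r : ℝ) (X : Matrix (Fin n) (Fin n) ℂ) : (r : ℂ) • X = r • X := by
  ext i j; simp [Complex.real_smul]


/-- The standard basis vector `e k` of `ℂⁿ`. -/
def stdBasisVec (n : ℕ) (k : Fin n) : Fin n → ℂ := Pi.single k 1

set_option maxHeartbeats 2000000 in
/-- **`‖exp(−X) v₁‖² = cosh² t + sinh² t` on the normal fiber** (Lemma `sphericality`).
In `V = ℂ^{p+q}` with the standard (majorant) norm, let `E_{1μ}, F_{1μ}` (for `p ≤ μ`) be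
the normal root vectors at the base point, acting by `E_{1μ} v₁ = −i v_μ`,
`E_{1μ} v_μ = i v₁`, `F_{1μ} v₁ = −v_μ`, `F_{1μ} v_μ = −v₁` and zero on the other basis
vectors.  For `X = Σ_μ x_μ E_{1μ} − Σ_μ y_μ F_{1μ}` and
`t = (Σ_μ (x_μ² + y_μ²))^{1/2}`, one has `‖exp(−X) v₁‖² = cosh²(t) + sinh²(t)`.
In particular `‖exp(−X) v₁‖² ≥ 1`, with equality iff `X = 0`. -/
theorem norm_exp_neg_X_eq_cosh_sq_add_sinh_sq
    (p q : ℕ) (α : Fin (p + q)) (hα : (α : ℕ) = 0) (hp : 0 < p)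
    (Emat Fmat : Fin (p + q) → Matrix (Fin (p + q)) (Fin (p + q)) ℂ)
    (hE1 : ∀ μ : Fin (p + q), p ≤ (μ : ℕ) →
      Emat μ *ᵥ stdBasisVec (p + q) α = (-Complex.I) • stdBasisVec (p + q) μ)
    (hE2 : ∀ μ : Fin (p + q), p ≤ (μ : ℕ) →
      Emat μ *ᵥ stdBasisVec (p + q) μ = Complex.I • stdBasisVec (p + q) α)
    (hE0 : ∀ μ : Fin (p + q), p ≤ (μ : ℕ) → ∀ k : Fin (p + q), k ≠ α → k ≠ μ →
      Emat μ *ᵥ stdBasisVec (p + q) k = 0)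
    (hF1 : ∀ μ : Fin (p + q), p ≤ (μ : ℕ) →
      Fmat μ *ᵥ stdBasisVec (p + q) α = -(stdBasisVec (p + q) μ))
    (hF2 : ∀ μ : Fin (p + q), p ≤ (μ : ℕ) →
      Fmat μ *ᵥ stdBasisVec (p + q) μ = -(stdBasisVec (p + q) α))
    (hF0 : ∀ μ : Fin (p + q), p ≤ (μ : ℕ) → ∀ k : Fin (p + q), k ≠ α → k ≠ μ →
      Fmat μ *ᵥ stdBasisVec (p + q) k = 0)
    (x y : Fin (p + q) → ℝ)
    (X : Matrix (Fin (p + q)) (Fin (p + q)) ℂ)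
    (hX : X = ∑ μ ∈ Finset.univ.filter (fun μ : Fin (p + q) => p ≤ (μ : ℕ)),
            ((x μ : ℂ) • Emat μ)
          - ∑ μ ∈ Finset.univ.filter (fun μ : Fin (p + q) => p ≤ (μ : ℕ)),
            ((y μ : ℂ) • Fmat μ))
    (t : ℝ)
    (ht : t = Real.sqrt (∑ μ ∈ Finset.univ.filter (fun μ : Fin (p + q) => p ≤ (μ : ℕ)),
            (x μ ^ 2 + y μ ^ 2))) :
    (∑ k : Fin (p + q), ‖(NormedSpace.exp (-X) *ᵥ stdBasisVec (p + q) α) k‖ ^ 2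
        = Real.cosh t ^ 2 + Real.sinh t ^ 2) ∧
    (1 ≤ ∑ k : Fin (p + q), ‖(NormedSpace.exp (-X) *ᵥ stdBasisVec (p + q) α) k‖ ^ 2) ∧
    ((∑ k : Fin (p + q), ‖(NormedSpace.exp (-X) *ᵥ stdBasisVec (p + q) α) k‖ ^ 2 = 1)
        ↔ X = 0) := by
  set F : Finset (Fin (p + q)) := Finset.univ.filter (fun μ : Fin (p + q) => p ≤ (μ : ℕ)) with hF
  set e : Fin (p + q) → (Fin (p + q) → ℂ) := stdBasisVec (p + q) with he
  set s : ℝ := ∑ μ ∈ F, (x μ ^ 2 + y μ ^ 2) with hsdef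
  have hαF : α ∉ F := by simp [hF, hα]; omega
  have hs0 : 0 ≤ s := Finset.sum_nonneg fun μ _ => by positivity
  by_cases hs : s = 0
  · -- degenerate case : X = 0
    have hxy : ∀ μ ∈ F, x μ = 0 ∧ y μ = 0 := by
      intro μ hμ
      have h0 : x μ ^ 2 + y μ ^ 2 = 0 :=
        (Finset.sum_eq_zero_iff_of_nonneg (fun ν _ => by positivity)).1 hs μ hμ
      constructor <;> nlinarith [sq_nonneg (x μ), sq_nonneg (y μ)]
    have hX0 : X = 0 := by
      rw [hX]
      rw [Finset.sum_eq_zero, Finset.sum_eq_zero, sub_zero]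
      · intro μ hμ; rw [(hxy μ hμ).2]; simp
      · intro μ hμ; rw [(hxy μ hμ).1]; simp
    have ht0 : t = 0 := by rw [ht, hs, Real.sqrt_zero]
    have hvec : NormedSpace.exp (-X) *ᵥ e α = e α := by
      rw [hX0, neg_zero, NormedSpace.exp_zero, one_mulVec]
    have hval : ∑ k : Fin (p + q), ‖(NormedSpace.exp (-X) *ᵥ e α) k‖ ^ 2 = 1 := by
      rw [hvec]
      calc ∑ k : Fin (p + q), ‖(e α) k‖ ^ 2
          = ∑ k : Fin (p + q), (if k = α then (1:ℝ) else 0) := by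
            refine Finset.sum_congr rfl fun k _ => ?_
            by_cases hk : k = α
            · subst hk; simp [he, stdBasisVec]
            · simp [he, stdBasisVec, Pi.single_apply, hk]
        _ = 1 := by simp
    refine ⟨?_, ?_, ?_⟩
    · rw [hval, ht0]; simp
    · rw [hval]
    · exact ⟨fun _ => hX0, fun _ => hval⟩
  · -- main case
    have hXα : X *ᵥ e α = ∑ μ ∈ F, (((y μ : ℂ) - Complex.I * x μ) • e μ) := by
      rw [hX, sub_mulVec, mySum_mulVec, mySum_mulVec]
      rw [← Finset.sum_sub_distrib]
      refine Finset.sum_congr rfl fun μ hμ => ?_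
      have hμ' : p ≤ (μ : ℕ) := by simpa [hF] using hμ
      rw [smul_mulVec, smul_mulVec, hE1 μ hμ', hF1 μ hμ']
      rw [smul_smul]
      module
    have hXμ : ∀ μ ∈ F, X *ᵥ e μ = ((y μ : ℂ) + Complex.I * x μ) • e α := by
      intro μ hμ
      have hμ' : p ≤ (μ : ℕ) := by simpa [hF] using hμ
      have hμα : μ ≠ α := by
        intro h; rw [h] at hμ'; omega
      rw [hX, sub_mulVec, mySum_mulVec, mySum_mulVec]
      rw [Finset.sum_eq_single μ, Finset.sum_eq_single μ]
      · rw [smul_mulVec, smul_mulVec, hE2 μ hμ', hF2 μ hμ']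
        rw [smul_smul]
        module
      · intro ν hν hνμ
        have hν' : p ≤ (ν : ℕ) := by simpa [hF] using hν
        rw [smul_mulVec, hF0 ν hν' μ hμα (fun h => hνμ h.symm), smul_zero]
      · exact fun h => absurd hμ h
      · intro ν hν hνμ
        have hν' : p ≤ (ν : ℕ) := by simpa [hF] using hν
        rw [smul_mulVec, hE0 ν hν' μ hμα (fun h => hνμ h.symm), smul_zero]
      · exact fun h => absurd hμ h
    have hXk : ∀ k : Fin (p + q), k ≠ α → k ∉ F → X *ᵥ e k = 0 := by
      intro k hkα hkF
      have hk' : ¬ p ≤ (k : ℕ) := by simpa [hF] using hkF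
      rw [hX, sub_mulVec, mySum_mulVec, mySum_mulVec]
      rw [Finset.sum_eq_zero, Finset.sum_eq_zero, sub_zero]
      · intro ν hν
        have hν' : p ≤ (ν : ℕ) := by simpa [hF] using hν
        have : k ≠ ν := by intro h; rw [h] at hk'; exact hk' hν'
        rw [smul_mulVec, hF0 ν hν' k hkα this, smul_zero]
      · intro ν hν
        have hν' : p ≤ (ν : ℕ) := by simpa [hF] using hν
        have : k ≠ ν := by intro h; rw [h] at hk'; exact hk' hν'
        rw [smul_mulVec, hE0 ν hν' k hkα this, smul_zero]
    have hXsum : ∀ (c : Fin (p+q) → ℂ) (g : Fin (p+q) → Fin (p+q) → ℂ),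
        X *ᵥ (∑ μ ∈ F, c μ • g μ) = ∑ μ ∈ F, c μ • (X *ᵥ g μ) := by
      intro c g
      rw [← Matrix.mulVecLin_apply, map_sum]
      exact Finset.sum_congr rfl fun μ _ => by
        rw [LinearMap.map_smul, Matrix.mulVecLin_apply]
    have hXXα : X *ᵥ (X *ᵥ e α) = s • e α := by
      rw [hXα, hXsum]
      rw [Finset.sum_congr rfl (fun μ hμ => by rw [hXμ μ hμ, smul_smul] :
        ∀ μ ∈ F, (((y μ : ℂ) - Complex.I * x μ) • (X *ᵥ e μ))
          = ((((y μ : ℂ) - Complex.I * x μ) * ((y μ : ℂ) + Complex.I * x μ)) • e α))]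
      rw [← Finset.sum_smul]
      have hsm : (s : ℂ) • e α = s • e α := by ext k; simp [Complex.real_smul]
      rw [← hsm]
      congr 1
      rw [hsdef]
      push_cast
      refine Finset.sum_congr rfl fun μ _ => ?_
      linear_combination (-((x μ : ℂ))^2) * Complex.I_sq
    have hX3 : X * (X * X) = s • X := by
      apply myCol_ext
      intro j
      show (X * (X * X)) *ᵥ e j = (s • X) *ᵥ e j
      rw [← mulVec_mulVec, ← mulVec_mulVec, smul_mulVec]
      by_cases hj : j = α
      · subst hj
        rw [hXXα, mulVec_smul]
      · by_cases hjF : j ∈ F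
        · rw [hXμ j hjF, mulVec_smul, mulVec_smul, hXXα]
          exact smul_comm _ _ _
        · rw [hXk j hj hjF, mulVec_zero, mulVec_zero, smul_zero]
    -- powers of X
    have hpow1 : ∀ k : ℕ, X ^ (2*k+1) = (s^k : ℝ) • X := by
      intro k
      induction k with
      | zero => simp
      | succ k ih =>
        have h1 : 2*(k+1)+1 = (2*k+1)+2 := by ring
        rw [h1, pow_add, ih, pow_two, smul_mul_assoc, ← mul_assoc]
        rw [mul_assoc, hX3, smul_smul, ← pow_succ]
    have hpow2 : ∀ k : ℕ, X ^ (2*k+2) = (s^k : ℝ) • (X * X) := by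
      intro k
      have h1 : 2*k+2 = (2*k+1)+1 := by ring
      rw [h1, pow_succ, hpow1, smul_mul_assoc]
    -- positivity facts
    have hspos : 0 < s := lt_of_le_of_ne hs0 (Ne.symm hs)
    have htpos : 0 < t := by rw [ht]; exact Real.sqrt_pos.2 hspos
    have ht2 : t^2 = s := by rw [ht]; exact Real.sq_sqrt hs0
    set c₁ : ℝ := Real.sinh t / t with hc₁def
    set c₂ : ℝ := (Real.cosh t - 1) / s with hc₂def
    -- real scalar series
    have hc₁ : HasSum (fun k : ℕ => s^k / (2*k+1)!) c₁ := by
      have h := (Real.hasSum_sinh t).div_const t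
      have hterm : (fun k : ℕ => t^(2*k+1)/(2*k+1)! / t) = fun k : ℕ => s^k/(2*k+1)! := by
        funext k
        rw [← ht2, pow_add, pow_mul, pow_one]
        field_simp
      rw [← hterm]
      exact h
    have hc₂ : HasSum (fun k : ℕ => s^k / (2*k+2)!) c₂ := by
      have h0 := Real.hasSum_cosh t
      have h1 : HasSum (fun k : ℕ => t^(2*(k+1))/(2*(k+1))!) (Real.cosh t - 1) := by
        refine (hasSum_nat_add_iff (f := fun n : ℕ => t^(2*n)/(2*n)!) 1).2 ?_
        have : (Real.cosh t - 1) + ∑ i ∈ Finset.range 1, t^(2*i)/(2*i)! = Real.cosh t := by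
          simp
        rw [this]
        exact h0
      have h2 := h1.div_const s
      have hterm : (fun k : ℕ => t^(2*(k+1))/(2*(k+1))! / s) = fun k : ℕ => s^k/(2*k+2)! := by
        funext k
        have hts : t^(2*(k+1)) = s^(k+1) := by
          rw [← ht2, ← pow_mul, mul_comm 2 (k+1)]
        rw [hts]
        have h22 : 2*(k+1) = 2*k+2 := by ring
        rw [h22, pow_succ]
        field_simp
      rw [← hterm]
      exact h2
    -- the matrix series
    have hodd : HasSum (fun k : ℕ => ((((2*k+1) : ℕ)! : ℂ))⁻¹ • (-X)^(2*k+1)) ((-c₁) • X) := by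
      have h := (hc₁.neg).smul_const X
      have hterm : (fun k : ℕ => (-(s^k/(2*k+1)!)) • X)
          = fun k : ℕ => ((((2*k+1) : ℕ)! : ℂ))⁻¹ • (-X)^(2*k+1) := by
        funext k
        rw [Odd.neg_pow ⟨k, by ring⟩, hpow1 k]
        rw [show ((((2*k+1) : ℕ)! : ℂ))⁻¹ = ((((((2*k+1) : ℕ)! : ℝ))⁻¹ : ℝ) : ℂ) by push_cast; ring]
        rw [myRealSmul, smul_neg, smul_smul, neg_smul]
        congr 1
        rw [div_eq_mul_inv, mul_comm]
      rw [← hterm]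
      exact h
    have heven : HasSum (fun k : ℕ => ((((2*k) : ℕ)! : ℂ))⁻¹ • (-X)^(2*k))
        (c₂ • (X*X) + 1) := by
      have h := hc₂.smul_const (X*X)
      have hterm : (fun k : ℕ => (s^k/(2*k+2)!) • (X*X))
          = fun k : ℕ => ((((2*(k+1)) : ℕ)! : ℂ))⁻¹ • (-X)^(2*(k+1)) := by
        funext k
        rw [Even.neg_pow ⟨k+1, by ring⟩, show 2*(k+1) = 2*k+2 by ring, hpow2 k]
        rw [show ((((2*k+2) : ℕ)! : ℂ))⁻¹ = ((((((2*k+2) : ℕ)! : ℝ))⁻¹ : ℝ) : ℂ) by push_cast; ring]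
        rw [myRealSmul, smul_smul]
        congr 1
        rw [div_eq_mul_inv, mul_comm]
      rw [hterm] at h
      have h3 := (hasSum_nat_add_iff
        (f := fun k : ℕ => ((((2*k) : ℕ)! : ℂ))⁻¹ • (-X)^(2*k)) 1).1 h
      have h4 : (c₂ • (X*X)) + ∑ i ∈ Finset.range 1, ((((2*i) : ℕ)! : ℂ))⁻¹ • (-X)^(2*i)
          = c₂ • (X*X) + 1 := by
        simp
      rw [h4] at h3
      exact h3
    have hsum : HasSum (fun n : ℕ => (((n : ℕ)! : ℂ))⁻¹ • (-X)^n)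
        ((c₂ • (X*X) + 1) + (-c₁) • X) := HasSum.even_add_odd heven hodd
    have hexp : NormedSpace.exp (-X) = (c₂ • (X*X) + 1) + (-c₁) • X := by
      rw [NormedSpace.exp_eq_tsum ℂ]
      exact hsum.tsum_eq
    -- the image vector
    have hc2s : c₂ * s = Real.cosh t - 1 := by
      rw [hc₂def, div_mul_cancel₀ _ hs]
    have hvec : NormedSpace.exp (-X) *ᵥ e α
        = Real.cosh t • e α + (-c₁) • ∑ μ ∈ F, (((y μ : ℂ) - Complex.I * x μ) • e μ) := by
      rw [hexp, add_mulVec, add_mulVec, one_mulVec, smul_mulVec, smul_mulVec]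
      rw [← mulVec_mulVec, hXXα, hXα, smul_smul, hc2s, sub_smul, one_smul]
      abel
    -- coordinates
    have hcoord : ∀ k : Fin (p+q), (NormedSpace.exp (-X) *ᵥ e α) k
        = if k = α then (Real.cosh t : ℂ)
          else (if p ≤ (k : ℕ) then (-(c₁:ℂ)) * ((y k : ℂ) - Complex.I * x k) else 0) := by
      intro k
      rw [hvec]
      simp only [Pi.add_apply, Pi.smul_apply, Finset.sum_apply]
      by_cases hk : k = α
      · rw [if_pos hk, hk]
        have h1 : (e α) α = 1 := by simp [he, stdBasisVec]
        have h2 : ∑ μ ∈ F, (((y μ : ℂ) - Complex.I * x μ) • (e μ) α) = 0 := by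
          refine Finset.sum_eq_zero fun μ hμ => ?_
          have hμα : μ ≠ α := fun h => hαF (h ▸ hμ)
          have : (e μ) α = 0 := by simp [he, stdBasisVec, Pi.single_apply, Ne.symm hμα]
          rw [this, smul_zero]
        rw [h1, h2]
        simp [Complex.real_smul]
      · rw [if_neg hk]
        have h1 : (e α) k = 0 := by simp [he, stdBasisVec, Pi.single_apply, hk]
        rw [h1]
        by_cases hkF : k ∈ F
        · rw [if_pos (by simpa [hF] using hkF)]
          have h2 : ∑ μ ∈ F, (((y μ : ℂ) - Complex.I * x μ) • (e μ) k)
              = (y k : ℂ) - Complex.I * x k := by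
            rw [Finset.sum_eq_single k]
            · have : (e k) k = 1 := by simp [he, stdBasisVec]
              rw [this, smul_eq_mul, mul_one]
            · intro ν hν hνk
              have : (e ν) k = 0 := by simp [he, stdBasisVec, Pi.single_apply, Ne.symm hνk]
              rw [this, smul_zero]
            · exact fun h => absurd hkF h
          rw [h2]
          simp [Complex.real_smul]
        · rw [if_neg (by simpa [hF] using hkF)]
          have h2 : ∑ μ ∈ F, (((y μ : ℂ) - Complex.I * x μ) • (e μ) k) = 0 := by
            refine Finset.sum_eq_zero fun μ hμ => ?_
            have hμk : k ≠ μ := fun h => hkF (h ▸ hμ)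
            have : (e μ) k = 0 := by simp [he, stdBasisVec, Pi.single_apply, hμk]
            rw [this, smul_zero]
          rw [h2]
          simp
    -- the norm-square of each coordinate
    have hterm : ∀ k : Fin (p+q), ‖(NormedSpace.exp (-X) *ᵥ e α) k‖ ^ 2
        = if k = α then Real.cosh t ^ 2
          else (if p ≤ (k : ℕ) then c₁^2 * (x k ^ 2 + y k ^ 2) else 0) := by
      intro k
      rw [hcoord k]
      by_cases hk : k = α
      · rw [if_pos hk, if_pos hk, Complex.norm_real, Real.norm_eq_abs, sq_abs]
      · rw [if_neg hk, if_neg hk]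
        by_cases hkF : p ≤ (k : ℕ)
        · rw [if_pos hkF, if_pos hkF, norm_mul, mul_pow]
          congr 1
          · rw [norm_neg, Complex.norm_real, Real.norm_eq_abs, sq_abs]
          · rw [Complex.sq_norm, Complex.normSq_apply]
            simp
            ring
        · rw [if_neg hkF, if_neg hkF, norm_zero]
          norm_num
    have hFerase : (Finset.univ.erase α).filter (fun k : Fin (p+q) => p ≤ (k : ℕ)) = F := by
      rw [hF]
      ext k
      simp only [Finset.mem_filter, Finset.mem_erase, Finset.mem_univ, true_and, and_true]
      constructor
      · rintro ⟨-, h⟩; exact h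
      · intro h
        refine ⟨fun hkα => ?_, h⟩
        rw [hkα, hα] at h
        omega
    have hsum2 : ∑ k : Fin (p + q), ‖(NormedSpace.exp (-X) *ᵥ e α) k‖ ^ 2
        = Real.cosh t ^ 2 + Real.sinh t ^ 2 := by
      rw [Finset.sum_congr rfl (fun k _ => hterm k)]
      rw [← Finset.add_sum_erase _ _ (Finset.mem_univ α), if_pos rfl]
      congr 1
      rw [Finset.sum_congr rfl (fun k hk => if_neg (Finset.mem_erase.1 hk).1)]
      rw [← Finset.sum_filter, hFerase, ← Finset.mul_sum, ← hsdef]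
      rw [hc₁def]
      rw [div_pow, div_mul_eq_mul_div, ← ht2]
      field_simp
    refine ⟨hsum2, ?_, ?_⟩
    · rw [hsum2]
      nlinarith [Real.one_le_cosh t, sq_nonneg (Real.sinh t)]
    · rw [hsum2]
      constructor
      · intro h
        exfalso
        have hsinh : 0 < Real.sinh t := Real.sinh_pos_iff.2 htpos
        nlinarith [Real.cosh_sq t]
      · intro hX0
        exfalso
        have hzero : X *ᵥ e α = 0 := by rw [hX0, zero_mulVec]
        rw [hXα] at hzero
        obtain ⟨μ, hμF, hμne⟩ : ∃ μ ∈ F, x μ ^ 2 + y μ ^ 2 ≠ 0 := by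
          by_contra hc
          push_neg at hc
          exact hs (by rw [hsdef]; exact Finset.sum_eq_zero hc)
        have h1 := congrFun hzero μ
        have hv : (∑ ν ∈ F, (((y ν : ℂ) - Complex.I * x ν) • e ν)) μ
            = (y μ : ℂ) - Complex.I * x μ := by
          rw [Finset.sum_apply, Finset.sum_eq_single μ]
          · have : (e μ) μ = 1 := by simp [he, stdBasisVec]
            rw [Pi.smul_apply, this, smul_eq_mul, mul_one]
          · intro ν hν hνμ
            have : (e ν) μ = 0 := by simp [he, stdBasisVec, Pi.single_apply, Ne.symm hνμ]
            rw [Pi.smul_apply, this, smul_zero]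
          · exact fun h => absurd hμF h
        rw [hv] at h1
        have h2 : (y μ : ℂ) - Complex.I * x μ = 0 := by simpa using h1
        rw [Complex.ext_iff] at h2
        simp [Complex.sub_re, Complex.sub_im, Complex.mul_re, Complex.mul_im] at h2
        apply hμne
        nlinarith [h2.1, h2.2]
end
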